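/- arXiv:1811.11097 — 4 statements merged into one kernel-verified Lean document; each statement's English description precedes it below -/
import Mathlib

section
/- Let X_1 ⊆ X_0 be Banach spaces with norms ‖·‖₀ and ‖·‖₁ = H⁻¹‖·‖₀ + |·|₁ where |·|₁ is a seminorm and H > 0. Define K²(u,t) = inf_{v∈X₁} ‖u−v‖₀² + t²‖v‖₁² and k²(u,t) = inf_{v∈X₁} ‖u−v‖₀² + t²|v|₁². For θ ∈ (0,1) set |u|_θ² = ∫₀^∞ t^{−2θ} k²(u,t) dt/t, ‖u‖_θ² = ∫₀^∞ t^{−2θ} K²(u,t) dt/t, and ‖u‖_{θ̃}² = H^{−2θ}‖u‖₀² + |u|_θ². Then there exists C > 0 depending only on θ (independent of H) such that C⁻¹‖u‖_θ ≤ ‖u‖_{θ̃} ≤ C‖u‖_θ for all u ∈ X₀. -/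
open MeasureTheory Set
open scoped ENNReal NNReal

lemma lint_Ioi_rpow {H a : ℝ} (hH : 0 < H) (ha : a < -1) :
    ∫⁻ t in Ioi H, ENNReal.ofReal (t ^ a) = ENNReal.ofReal (H ^ (a + 1) / (-(a + 1))) := by
  rw [← ofReal_integral_eq_lintegral_ofReal (integrableOn_Ioi_rpow_of_lt ha hH)]
  · rw [integral_Ioi_rpow_of_lt ha hH]
    congr 1
    rw [div_neg, neg_div]
  · filter_upwards [ae_restrict_mem measurableSet_Ioi] with t ht
    exact Real.rpow_nonneg (le_of_lt (hH.trans ht)) a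

lemma lint_Ioc_rpow {H a : ℝ} (hH : 0 < H) (ha : -1 < a) :
    ∫⁻ t in Ioc 0 H, ENNReal.ofReal (t ^ a) = ENNReal.ofReal (H ^ (a + 1) / (a + 1)) := by
  have hInt : IntegrableOn (fun t : ℝ => t ^ a) (Ioc 0 H) := by
    have := (intervalIntegral.intervalIntegrable_rpow' (a := 0) (b := H) ha)
    rwa [intervalIntegrable_iff_integrableOn_Ioc_of_le hH.le] at this
  rw [← ofReal_integral_eq_lintegral_ofReal hInt]
  · congr 1
    rw [← intervalIntegral.integral_of_le hH.le, integral_rpow (Or.inl ha)]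
    rw [Real.zero_rpow (by linarith), sub_zero]
  · filter_upwards [ae_restrict_mem measurableSet_Ioc] with t ht
    exact Real.rpow_nonneg ht.1.le a

set_option maxHeartbeats 2000000 in
/-- Interpolation of seminorms: the K-method norm built from the full norm
`‖·‖₁ = H⁻¹‖·‖₀ + |·|₁` is equivalent, uniformly in `H`, to the norm
`(H^{-2θ}‖u‖₀² + |u|_θ²)^{1/2}` built from the seminorm `k`-functional.
(Stated in squared form, with equivalence constant `C` depending only on `θ`.) -/
theorem stable_decomposition_K_vs_k (θ : ℝ) (hθ : θ ∈ Set.Ioo (0:ℝ) 1) :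
    ∃ C : ℝ, 0 < C ∧
      ∀ (X : Type) [inst : NormedAddCommGroup X] [inst2 : NormedSpace ℝ X]
        [inst3 : CompleteSpace X]
        (X₁ : Submodule ℝ X) (s : X₁ → ℝ) (H : ℝ), 0 < H →
        (∀ v, 0 ≤ s v) →
        (∀ v w : X₁, s (v + w) ≤ s v + s w) →
        (∀ (c : ℝ) (v : X₁), s (c • v) = |c| * s v) →
        ∀ u : X,
        -- squared K-functional for the pair (X₀, (X₁, ‖·‖₁)) with ‖v‖₁ = H⁻¹‖v‖₀ + |v|₁
        let K2 : ℝ → ℝ := fun t =>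
          ⨅ v : X₁, ‖u - (v : X)‖ ^ 2 + t ^ 2 * (H⁻¹ * ‖(v : X)‖ + s v) ^ 2
        -- squared k-functional using only the seminorm
        let k2 : ℝ → ℝ := fun t =>
          ⨅ v : X₁, ‖u - (v : X)‖ ^ 2 + t ^ 2 * (s v) ^ 2
        -- squared interpolation norm ‖u‖_θ²
        let Nθ : ℝ≥0∞ := ∫⁻ t in Set.Ioi (0:ℝ), ENNReal.ofReal (t ^ (-2*θ - 1) * K2 t)
        -- squared interpolation seminorm |u|_θ²
        let Sθ : ℝ≥0∞ := ∫⁻ t in Set.Ioi (0:ℝ), ENNReal.ofReal (t ^ (-2*θ - 1) * k2 t)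
        -- squared norm ‖u‖_{θ̃}² = H^{-2θ}‖u‖₀² + |u|_θ²
        let Ntθ : ℝ≥0∞ := ENNReal.ofReal (H ^ (-2*θ) * ‖u‖ ^ 2) + Sθ
        -- C⁻¹ ‖u‖_θ ≤ ‖u‖_{θ̃} ≤ C ‖u‖_θ, in squared form
        Nθ ≤ ENNReal.ofReal (C ^ 2) * Ntθ ∧ Ntθ ≤ ENNReal.ofReal (C ^ 2) * Nθ := by
  obtain ⟨hθ0, hθ1⟩ := hθ
  have h1θ : 0 < 1 - θ := by linarith
  obtain ⟨c, hc_def⟩ : ∃ c : ℝ, c = 5 + 2/(1-θ) + 1/(2*θ) := ⟨_, rfl⟩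
  have hc5 : (5:ℝ) ≤ c := by
    have h1 : 0 ≤ 2/(1-θ) := by positivity
    have h2 : 0 ≤ 1/(2*θ) := by positivity
    linarith
  have hcpos : (0:ℝ) < c := by linarith
  refine ⟨Real.sqrt c, Real.sqrt_pos.2 hcpos, ?_⟩
  intro X inst inst2 inst3 X₁ s H hH hs0 hstri hshom u K2 k2 Nθ Sθ Ntθ
  rw [Real.sq_sqrt hcpos.le]
  haveI : Nonempty X₁ := ⟨0⟩
  have hK2_def : ∀ t : ℝ, K2 t =
      ⨅ v : X₁, ‖u - (v : X)‖ ^ 2 + t ^ 2 * (H⁻¹ * ‖(v : X)‖ + s v) ^ 2 := fun _ => rfl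
  have hk2_def : ∀ t : ℝ, k2 t =
      ⨅ v : X₁, ‖u - (v : X)‖ ^ 2 + t ^ 2 * (s v) ^ 2 := fun _ => rfl
  have hNθ_def : Nθ = ∫⁻ t in Ioi (0:ℝ), ENNReal.ofReal (t ^ (-2*θ - 1) * K2 t) := rfl
  have hSθ_def : Sθ = ∫⁻ t in Ioi (0:ℝ), ENNReal.ofReal (t ^ (-2*θ - 1) * k2 t) := rfl
  have hNtθ_def : Ntθ = ENNReal.ofReal (H ^ (-2*θ) * ‖u‖ ^ 2) + Sθ := rfl
  have hs_zero : s 0 = 0 := by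
    have h := hshom 0 0
    simpa using h
  have hbddK : ∀ t : ℝ, BddBelow (range fun v : X₁ =>
      ‖u - (v : X)‖ ^ 2 + t ^ 2 * (H⁻¹ * ‖(v : X)‖ + s v) ^ 2) := by
    intro t
    refine ⟨0, ?_⟩
    rintro x ⟨v, rfl⟩
    positivity
  have hbddk : ∀ t : ℝ, BddBelow (range fun v : X₁ =>
      ‖u - (v : X)‖ ^ 2 + t ^ 2 * (s v) ^ 2) := by
    intro t
    refine ⟨0, ?_⟩
    rintro x ⟨v, rfl⟩
    positivity
  -- pointwise comparison 1 : k2 ≤ K2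
  have hP1 : ∀ t : ℝ, k2 t ≤ K2 t := by
    intro t
    rw [hK2_def, hk2_def]
    refine ciInf_mono (hbddk t) ?_
    intro v
    have hsv := hs0 v
    have hip : 0 ≤ H⁻¹ * ‖(v : X)‖ := by positivity
    have h1 : (s v) ^ 2 ≤ (H⁻¹ * ‖(v : X)‖ + s v) ^ 2 := by nlinarith
    have h2 := mul_le_mul_of_nonneg_left h1 (sq_nonneg t)
    linarith
  -- pointwise comparison 2 : K2 ≤ ‖u‖²
  have hK2le : ∀ t : ℝ, K2 t ≤ ‖u‖ ^ 2 := by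
    intro t
    rw [hK2_def]
    have h := ciInf_le (hbddK t) (0 : X₁)
    simpa [hs_zero] using h
  -- pointwise comparison 3 : for t ≥ H, ‖u‖² ≤ 2 K2 t
  have hP2 : ∀ t : ℝ, H ≤ t → ‖u‖ ^ 2 ≤ 2 * K2 t := by
    intro t ht
    have h : ‖u‖ ^ 2 / 2 ≤ K2 t := by
      rw [hK2_def]
      refine le_ciInf ?_
      intro v
      have h1 : ‖u‖ ≤ ‖u - (v : X)‖ + ‖(v : X)‖ := by
        simpa using norm_add_le (u - (v : X)) (v : X)
      have htH : 1 ≤ t * H⁻¹ := by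
        have h3 : 0 ≤ (t - H) * H⁻¹ :=
          mul_nonneg (by linarith) (inv_nonneg.2 hH.le)
        have h4 : H * H⁻¹ = 1 := mul_inv_cancel₀ hH.ne'
        nlinarith
      have h2 : ‖(v : X)‖ ≤ t * (H⁻¹ * ‖(v : X)‖ + s v) := by
        have h5 : 0 ≤ (t * H⁻¹ - 1) * ‖(v : X)‖ :=
          mul_nonneg (by linarith) (norm_nonneg _)
        have h6 : 0 ≤ t * s v := mul_nonneg (le_trans hH.le ht) (hs0 v)
        nlinarith
      have h1' : ‖u‖ ^ 2 ≤ (‖u - (v : X)‖ + ‖(v : X)‖) ^ 2 :=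
        pow_le_pow_left₀ (norm_nonneg u) h1 2
      have h2' : ‖(v : X)‖ ^ 2 ≤ (t * (H⁻¹ * ‖(v : X)‖ + s v)) ^ 2 :=
        pow_le_pow_left₀ (norm_nonneg _) h2 2
      nlinarith [sq_nonneg (‖u - (v : X)‖ - ‖(v : X)‖)]
    linarith
  -- pointwise comparison 4 : for 0 < t ≤ H, K2 t ≤ 5 k2 t + 4 (t/H)² ‖u‖²
  have hP4 : ∀ t : ℝ, 0 < t → t ≤ H →
      K2 t ≤ 5 * k2 t + 4 * (t * H⁻¹) ^ 2 * ‖u‖ ^ 2 := by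
    intro t ht htH
    have ht2 : (t * H⁻¹) ^ 2 ≤ 1 := by
      have h3 : t * H⁻¹ ≤ 1 := by
        have h4 : H * H⁻¹ = 1 := mul_inv_cancel₀ hH.ne'
        have h5 := mul_le_mul_of_nonneg_right htH (inv_nonneg.2 hH.le)
        nlinarith
      have h6 : 0 ≤ t * H⁻¹ := mul_nonneg ht.le (inv_nonneg.2 hH.le)
      nlinarith
    have key : ∀ v : X₁, K2 t ≤
        5 * (‖u - (v : X)‖ ^ 2 + t ^ 2 * (s v) ^ 2) + 4 * (t * H⁻¹) ^ 2 * ‖u‖ ^ 2 := by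
      intro v
      have hv : K2 t ≤ ‖u - (v : X)‖ ^ 2 + t ^ 2 * (H⁻¹ * ‖(v : X)‖ + s v) ^ 2 := by
        rw [hK2_def]; exact ciInf_le (hbddK t) v
      refine hv.trans ?_
      have hnv : ‖(v : X)‖ ≤ ‖u‖ + ‖u - (v : X)‖ := by
        simpa [sub_sub_cancel] using norm_sub_le u (u - (v : X))
      have hnv2 : ‖(v : X)‖ ^ 2 ≤ 2 * ‖u‖ ^ 2 + 2 * ‖u - (v : X)‖ ^ 2 := by
        nlinarith [hnv, norm_nonneg (v : X), sq_nonneg (‖u‖ - ‖u - (v : X)‖)]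
      nlinarith [mul_nonneg (sq_nonneg t) (sq_nonneg (H⁻¹ * ‖(v : X)‖ - s v)),
        mul_le_mul_of_nonneg_left hnv2 (sq_nonneg (t * H⁻¹)),
        mul_le_mul_of_nonneg_left ht2 (sq_nonneg ‖u - (v : X)‖),
        mul_le_mul_of_nonneg_left ht2 (sq_nonneg ‖u‖)]
    have hle : (K2 t - 4 * (t * H⁻¹) ^ 2 * ‖u‖ ^ 2) / 5 ≤ k2 t := by
      rw [hk2_def]
      exact le_ciInf fun v => by linarith [key v]
    linarith
  -- the two basic integrals
  have hIoi : ∫⁻ t in Ioi H, ENNReal.ofReal (t ^ (-2*θ - 1))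
      = ENNReal.ofReal (H ^ (-2*θ) / (2*θ)) := by
    rw [lint_Ioi_rpow hH (by linarith : -2*θ - 1 < -1)]
    congr 2 <;> ring
  have hIoc : ∫⁻ t in Ioc (0:ℝ) H, ENNReal.ofReal (t ^ (1 - 2*θ))
      = ENNReal.ofReal (H ^ (2 - 2*θ) / (2 - 2*θ)) := by
    rw [lint_Ioc_rpow hH (by linarith : (-1:ℝ) < 1 - 2*θ)]
    congr 2 <;> ring
  -- Sθ ≤ Nθ
  have hSN : Sθ ≤ Nθ := by
    rw [hSθ_def, hNθ_def]
    refine lintegral_mono_ae ?_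
    filter_upwards [ae_restrict_mem measurableSet_Ioi] with t ht
    exact ENNReal.ofReal_le_ofReal
      (mul_le_mul_of_nonneg_left (hP1 t) (Real.rpow_nonneg (le_of_lt ht) _))
  -- lower bound for Nθ in terms of H^{-2θ}‖u‖²
  have hNlow : ENNReal.ofReal (H ^ (-2*θ) * ‖u‖ ^ 2) ≤ ENNReal.ofReal (4*θ) * Nθ := by
    have h1 : ∫⁻ t in Ioi H,
        ENNReal.ofReal (‖u‖ ^ 2 / 2) * ENNReal.ofReal (t ^ (-2*θ - 1)) ≤ Nθ := by
      rw [hNθ_def]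
      refine le_trans ?_ (lintegral_mono_set (Ioi_subset_Ioi hH.le))
      refine lintegral_mono_ae ?_
      filter_upwards [ae_restrict_mem measurableSet_Ioi] with t ht
      rw [← ENNReal.ofReal_mul (by positivity)]
      refine ENNReal.ofReal_le_ofReal ?_
      have h2 := hP2 t ht.le
      have hw : 0 ≤ t ^ (-2*θ - 1) := Real.rpow_nonneg (hH.trans ht).le _
      nlinarith [mul_le_mul_of_nonneg_left h2 hw]
    rw [lintegral_const_mul' _ _ ENNReal.ofReal_ne_top, hIoi] at h1
    calc ENNReal.ofReal (H ^ (-2*θ) * ‖u‖ ^ 2)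
        = ENNReal.ofReal (4*θ) *
            (ENNReal.ofReal (‖u‖ ^ 2 / 2) * ENNReal.ofReal (H ^ (-2*θ) / (2*θ))) := by
          rw [← ENNReal.ofReal_mul (by positivity), ← ENNReal.ofReal_mul (by positivity)]
          congr 1
          field_simp
          ring
      _ ≤ ENNReal.ofReal (4*θ) * Nθ := mul_le_mul_right h1 _
  -- second inequality
  have ineq2 : Ntθ ≤ ENNReal.ofReal c * Nθ := by
    rw [hNtθ_def]
    calc ENNReal.ofReal (H ^ (-2*θ) * ‖u‖ ^ 2) + Sθ
        ≤ ENNReal.ofReal (4*θ) * Nθ + 1 * Nθ := by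
          refine add_le_add hNlow ?_
          rw [one_mul]; exact hSN
      _ = (ENNReal.ofReal (4*θ) + 1) * Nθ := (add_mul _ _ _).symm
      _ ≤ ENNReal.ofReal c * Nθ := by
          refine mul_le_mul_left ?_ _
          rw [← ENNReal.ofReal_one, ← ENNReal.ofReal_add (by positivity) (by norm_num)]
          exact ENNReal.ofReal_le_ofReal (by linarith)
  -- split Nθ
  have split : Nθ = (∫⁻ t in Ioc (0:ℝ) H, ENNReal.ofReal (t ^ (-2*θ - 1) * K2 t))
      + ∫⁻ t in Ioi H, ENNReal.ofReal (t ^ (-2*θ - 1) * K2 t) := by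
    rw [hNθ_def, ← Ioc_union_Ioi_eq_Ioi hH.le,
      lintegral_union measurableSet_Ioi (Ioc_disjoint_Ioi le_rfl)]
  -- the tail part
  have hpart2 : ∫⁻ t in Ioi H, ENNReal.ofReal (t ^ (-2*θ - 1) * K2 t)
      ≤ ENNReal.ofReal (1/(2*θ) * (H ^ (-2*θ) * ‖u‖ ^ 2)) := by
    have h1 : ∫⁻ t in Ioi H, ENNReal.ofReal (t ^ (-2*θ - 1) * K2 t)
        ≤ ∫⁻ t in Ioi H, ENNReal.ofReal (‖u‖ ^ 2) * ENNReal.ofReal (t ^ (-2*θ - 1)) := by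
      refine lintegral_mono_ae ?_
      filter_upwards [ae_restrict_mem measurableSet_Ioi] with t ht
      rw [← ENNReal.ofReal_mul (by positivity)]
      refine ENNReal.ofReal_le_ofReal ?_
      have hw : 0 ≤ t ^ (-2*θ - 1) := Real.rpow_nonneg (hH.trans ht).le _
      nlinarith [mul_le_mul_of_nonneg_left (hK2le t) hw]
    rw [lintegral_const_mul' _ _ ENNReal.ofReal_ne_top, hIoi] at h1
    refine h1.trans (le_of_eq ?_)
    rw [← ENNReal.ofReal_mul (by positivity)]
    congr 1
    ring
  -- the near-zero part
  have hmeas : Measurable fun t : ℝ =>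
      ENNReal.ofReal (4 * ‖u‖ ^ 2 * H⁻¹ ^ 2 * t ^ (1 - 2*θ)) := by
    fun_prop
  have hpart1 : ∫⁻ t in Ioc (0:ℝ) H, ENNReal.ofReal (t ^ (-2*θ - 1) * K2 t)
      ≤ ENNReal.ofReal 5 * Sθ + ENNReal.ofReal (2/(1-θ) * (H ^ (-2*θ) * ‖u‖ ^ 2)) := by
    have h1 : ∫⁻ t in Ioc (0:ℝ) H, ENNReal.ofReal (t ^ (-2*θ - 1) * K2 t)
        ≤ ∫⁻ t in Ioc (0:ℝ) H, (ENNReal.ofReal (5 * (t ^ (-2*θ - 1) * k2 t))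
            + ENNReal.ofReal (4 * ‖u‖ ^ 2 * H⁻¹ ^ 2 * t ^ (1 - 2*θ))) := by
      refine lintegral_mono_ae ?_
      filter_upwards [ae_restrict_mem measurableSet_Ioc] with t ht
      refine le_trans (ENNReal.ofReal_le_ofReal ?_) ENNReal.ofReal_add_le
      have hw : 0 ≤ t ^ (-2*θ - 1) := Real.rpow_nonneg ht.1.le _
      have hkey := hP4 t ht.1 ht.2
      have hpow : t ^ (-2*θ - 1) * t ^ 2 = t ^ (1 - 2*θ) := by
        rw [← Real.rpow_natCast t 2, ← Real.rpow_add ht.1]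
        congr 1
        push_cast
        ring
      rw [← hpow]
      nlinarith [mul_le_mul_of_nonneg_left hkey hw]
    rw [lintegral_add_right _ hmeas] at h1
    refine h1.trans (add_le_add ?_ (le_of_eq ?_))
    · simp_rw [ENNReal.ofReal_mul (by norm_num : (0:ℝ) ≤ 5)]
      rw [lintegral_const_mul' _ _ ENNReal.ofReal_ne_top]
      refine mul_le_mul_right ?_ _
      rw [hSθ_def]
      exact lintegral_mono_set Ioc_subset_Ioi_self
    · simp_rw [ENNReal.ofReal_mul (by positivity : (0:ℝ) ≤ 4 * ‖u‖ ^ 2 * H⁻¹ ^ 2)]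
      rw [lintegral_const_mul' _ _ ENNReal.ofReal_ne_top, hIoc,
        ← ENNReal.ofReal_mul (by positivity)]
      congr 1
      have hH2 : H ^ (2 - 2*θ) = H ^ 2 * H ^ (-2*θ) := by
        rw [← Real.rpow_natCast H 2, ← Real.rpow_add hH]
        congr 1
        push_cast
        ring
      rw [hH2]
      have h2θ : (2 - 2*θ) ≠ 0 := by linarith
      have h1θ' : (1 - θ) ≠ 0 := by linarith
      field_simp
      ring
  -- first inequality
  have ineq1 : Nθ ≤ ENNReal.ofReal c * Ntθ := by
    rw [split]
    calc (∫⁻ t in Ioc (0:ℝ) H, ENNReal.ofReal (t ^ (-2*θ - 1) * K2 t))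
          + ∫⁻ t in Ioi H, ENNReal.ofReal (t ^ (-2*θ - 1) * K2 t)
        ≤ (ENNReal.ofReal 5 * Sθ + ENNReal.ofReal (2/(1-θ) * (H ^ (-2*θ) * ‖u‖ ^ 2)))
          + ENNReal.ofReal (1/(2*θ) * (H ^ (-2*θ) * ‖u‖ ^ 2)) := add_le_add hpart1 hpart2
      _ ≤ ENNReal.ofReal c * Sθ + ENNReal.ofReal c * ENNReal.ofReal (H ^ (-2*θ) * ‖u‖ ^ 2) := by
          rw [add_assoc]
          refine add_le_add (mul_le_mul_left (ENNReal.ofReal_le_ofReal hc5) _) ?_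
          rw [← ENNReal.ofReal_add (by positivity) (by positivity),
            ← ENNReal.ofReal_mul hcpos.le]
          refine ENNReal.ofReal_le_ofReal ?_
          have hX : 0 ≤ H ^ (-2*θ) * ‖u‖ ^ 2 := by positivity
          rw [hc_def]
          nlinarith [hX]
      _ = ENNReal.ofReal c * Ntθ := by
          rw [hNtθ_def]
          ring
  exact ⟨ineq1, ineq2⟩
end

section
/- Covering lemma with distance-proportional balls: Let M ≠ ∅ be a closed subset of ℝ^d, and fix β ∈ (0,1), c ∈ (0,1) with (1+β)c < 1. For x ∈ ℝ^d∖M write B_x = closed ball of radius c·d_M(x) about x and B̂_x = closed ball of radius (1+β)c·d_M(x) about x, where d_M(x) = dist(x, M). Then for every open ω ⊂ ℝ^d∖M there exist points (x_i)_{i∈ℕ} ⊂ ω and a constant N depending only on d, β, c such that ω ⊂ ⋃_i B_{x_i} and every point of ℝ^d lies in at most N of the stretched balls B̂_{x_i}. -/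
open Metric Set

open MeasureTheory

lemma finset_card_mul_le {d : ℕ} (y : EuclideanSpace ℝ (Fin d)) {R s : ℝ} (hs : 0 < s)
    (F : Finset (EuclideanSpace ℝ (Fin d))) (hFne : F.Nonempty)
    (hF : ∀ t ∈ F, dist y t ≤ R)
    (hsep : ∀ t ∈ F, ∀ u ∈ F, t ≠ u → s ≤ dist t u) :
    (F.card : ℝ) * (s/3)^d ≤ (R + s/3)^d := by
  obtain ⟨t0, ht0⟩ := hFne
  have hR : 0 ≤ R := le_trans dist_nonneg (hF t0 ht0)
  have hs3 : (0:ℝ) < s/3 := by linarith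
  set μ := (volume : Measure (EuclideanSpace ℝ (Fin d))) with hμ
  have hdisj : (↑F : Set (EuclideanSpace ℝ (Fin d))).PairwiseDisjoint
      (fun t => closedBall t (s/3)) := by
    intro t ht u hu htu
    exact closedBall_disjoint_closedBall (by nlinarith [hsep t ht u hu htu])
  have hmeas : μ (⋃ t ∈ F, closedBall t (s/3)) = ∑ t ∈ F, μ (closedBall t (s/3)) :=
    measure_biUnion_finset hdisj (fun t _ => measurableSet_closedBall)
  have hsub : (⋃ t ∈ F, closedBall t (s/3)) ⊆ closedBall y (R + s/3) := by
    intro z hz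
    simp only [Set.mem_iUnion] at hz
    obtain ⟨t, ht, hzt⟩ := hz
    refine closedBall_subset_closedBall' ?_ hzt
    have := hF t ht
    rw [dist_comm] at this
    linarith
  have hball : ∀ t : EuclideanSpace ℝ (Fin d), μ (closedBall t (s/3))
      = ENNReal.ofReal ((s/3)^d) * μ (ball 0 1) := by
    intro t
    rw [Measure.addHaar_closedBall μ t hs3.le, finrank_euclideanSpace_fin]
  have key : (F.card : ENNReal) * ENNReal.ofReal ((s/3)^d) * μ (ball 0 1)
      ≤ ENNReal.ofReal ((R + s/3)^d) * μ (ball 0 1) := by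
    calc (F.card : ENNReal) * ENNReal.ofReal ((s/3)^d) * μ (ball 0 1)
        = ∑ _t ∈ F, ENNReal.ofReal ((s/3)^d) * μ (ball 0 1) := by
          rw [Finset.sum_const, nsmul_eq_mul, mul_assoc]
      _ = ∑ t ∈ F, μ (closedBall t (s/3)) := by
          exact (Finset.sum_congr rfl (fun t _ => (hball t))).symm
      _ = μ (⋃ t ∈ F, closedBall t (s/3)) := hmeas.symm
      _ ≤ μ (closedBall y (R + s/3)) := measure_mono hsub
      _ = ENNReal.ofReal ((R + s/3)^d) * μ (ball 0 1) := by
          rw [Measure.addHaar_closedBall μ y (by linarith), finrank_euclideanSpace_fin]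
  have hV0 : μ (ball (0 : EuclideanSpace ℝ (Fin d)) 1) ≠ 0 := (measure_ball_pos μ 0 one_pos).ne'
  have hVt : μ (ball (0 : EuclideanSpace ℝ (Fin d)) 1) ≠ ⊤ := measure_ball_lt_top.ne
  have key2 := (ENNReal.mul_le_mul_iff_left hV0 hVt).mp key
  have key3 : ENNReal.ofReal ((F.card : ℝ) * (s/3)^d) ≤ ENNReal.ofReal ((R + s/3)^d) := by
    rwa [ENNReal.ofReal_mul (by positivity), ENNReal.ofReal_natCast]
  exact (ENNReal.ofReal_le_ofReal_iff (by positivity)).mp key3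

lemma encard_le_separated {d : ℕ} {y : EuclideanSpace ℝ (Fin d)} {R s : ℝ} (hs : 0 < s)
    {A : Set (EuclideanSpace ℝ (Fin d))} (hA : ∀ t ∈ A, dist y t ≤ R)
    (hsep : ∀ t ∈ A, ∀ u ∈ A, t ≠ u → s ≤ dist t u) :
    A.encard ≤ (Nat.ceil (((R + s/3)/(s/3))^d) : ℕ∞) := by
  set N := Nat.ceil (((R + s/3)/(s/3))^d) with hN
  by_contra hcon
  push_neg at hcon
  have h1 : ((N+1 : ℕ) : ℕ∞) ≤ A.encard := by
    push_cast
    exact (ENat.add_one_le_iff (by simp)).mpr hcon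
  obtain ⟨B, hBA, hBcard⟩ := Set.exists_subset_encard_eq h1
  have hBfin : B.Finite := Set.finite_of_encard_eq_coe hBcard
  have hFcard : hBfin.toFinset.card = N + 1 := by
    have := hBfin.encard_eq_coe_toFinset_card
    rw [hBcard] at this
    exact_mod_cast this.symm
  have hFne : hBfin.toFinset.Nonempty := by
    rw [← Finset.card_pos, hFcard]; omega
  have hkey := finset_card_mul_le y hs hBfin.toFinset hFne
    (fun t ht => hA t (hBA (hBfin.mem_toFinset.mp ht)))
    (fun t ht u hu htu => hsep t (hBA (hBfin.mem_toFinset.mp ht)) u (hBA (hBfin.mem_toFinset.mp hu)) htu)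
  rw [hFcard] at hkey
  have hs3 : (0:ℝ) < (s/3)^d := by positivity
  have h2 : ((N:ℝ) + 1) ≤ ((R + s/3)/(s/3))^d := by
    rw [div_pow, le_div_iff₀ hs3]
    push_cast at hkey ⊢
    linarith
  have h3 : N + 1 ≤ N := by
    have := Nat.le_ceil (((R + s/3)/(s/3))^d)
    have h4 : ((N:ℝ) + 1) ≤ (N : ℝ) := by
      rw [hN]
      calc ((N:ℝ) + 1) ≤ ((R + s/3)/(s/3))^d := h2
        _ ≤ (Nat.ceil (((R + s/3)/(s/3))^d) : ℝ) := Nat.le_ceil _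
    exact_mod_cast h4
  omega

lemma countable_of_separated {d : ℕ} {ε : ℝ} (hε : 0 < ε) {T : Set (EuclideanSpace ℝ (Fin d))}
    (h : ∀ x ∈ T, ∀ y ∈ T, x ≠ y → ε ≤ dist x y) : T.Countable := by
  obtain ⟨D, hDc, hDd⟩ := TopologicalSpace.exists_countable_dense (EuclideanSpace ℝ (Fin d))
  have hch : ∀ x : EuclideanSpace ℝ (Fin d), ∃ p, p ∈ D ∧ dist x p < ε/2 := by
    intro x
    obtain ⟨p, hp, hpd⟩ := hDd.exists_dist_lt x (by linarith : (0:ℝ) < ε/2)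
    exact ⟨p, hp, hpd⟩
  choose p hpD hpd using hch
  have hinj : Set.InjOn p T := by
    intro u hu v hv huv
    by_contra hne
    have h1 := h u hu v hv hne
    have h2 : dist u v ≤ dist u (p u) + dist (p v) v := by
      rw [huv]; exact dist_triangle u (p v) v
    have h3 := hpd u
    have h4 := hpd v
    rw [dist_comm (p v) v] at h2
    linarith
  exact (Set.mapsTo_image p T).countable_of_injOn hinj
    ((hDc.mono (Set.image_subset_iff.mpr (fun x _ => hpD x))))

/-- Covering lemma with distance-proportional balls: for closed `M ≠ ∅` and any open
`ω ⊆ ℝ^d ∖ M`, there is a family of centers `x_i ∈ ω` such that the closed balls of radius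
`c·d_M(x_i)` cover `ω`, while the stretched balls of radius `(1+β)c·d_M(x_i)` have overlap
bounded by a constant `N = N(d, β, c)`. -/
theorem covering_lemma_distance_balls (d : ℕ) (β c : ℝ)
    (hβ : β ∈ Set.Ioo (0:ℝ) 1) (hc : c ∈ Set.Ioo (0:ℝ) 1) (hβc : (1 + β) * c < 1) :
    ∃ N : ℕ,
      ∀ M : Set (EuclideanSpace ℝ (Fin d)), IsClosed M → M.Nonempty →
      ∀ ω : Set (EuclideanSpace ℝ (Fin d)), IsOpen ω → ω ⊆ Mᶜ →
      ∃ (S : Set ℕ) (x : ℕ → EuclideanSpace ℝ (Fin d)),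
        (∀ i ∈ S, x i ∈ ω) ∧
        (ω ⊆ ⋃ i ∈ S, closedBall (x i) (c * infDist (x i) M)) ∧
        (∀ y : EuclideanSpace ℝ (Fin d),
          {i ∈ S | y ∈ closedBall (x i) ((1 + β) * c * infDist (x i) M)}.encard ≤ N) := by
  classical
  obtain ⟨hβ0, hβ1⟩ := hβ
  obtain ⟨hc0, hc1⟩ := hc
  set a : ℝ := (1 + β) * c with ha
  have ha0 : 0 < a := by rw [ha]; positivity
  have ha1 : a < 1 := hβc
  set s₀ : ℝ := c / (2 * (1 + a)) with hs₀
  set R₀ : ℝ := a / (1 - a) with hR₀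
  have hs₀0 : 0 < s₀ := by rw [hs₀]; positivity
  have hR₀0 : 0 < R₀ := div_pos ha0 (by linarith)
  refine ⟨Nat.ceil (((R₀ + s₀/3)/(s₀/3))^d), ?_⟩
  intro M hM hMne ω hω hωM
  have hfpos : ∀ z ∈ ω, 0 < infDist z M := fun z hz =>
    (hM.notMem_iff_infDist_pos hMne).mp (hωM hz)
  have hlip : ∀ u v : EuclideanSpace ℝ (Fin d),
      infDist u M ≤ infDist v M + dist u v := fun u v => infDist_le_infDist_add_dist
  -- Zorn: maximal separated subset
  set Good : Set (Set (EuclideanSpace ℝ (Fin d))) :=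
    {T | T ⊆ ω ∧ ∀ u ∈ T, ∀ v ∈ T, u ≠ v →
      c/2 * min (infDist u M) (infDist v M) < dist u v} with hGood
  obtain ⟨T, hTmax⟩ := zorn_subset Good (by
    intro C hC hchain
    refine ⟨⋃₀ C, ⟨Set.sUnion_subset fun s hs => (hC hs).1, ?_⟩,
      fun s hs => Set.subset_sUnion_of_mem hs⟩
    intro u hu v hv huv
    obtain ⟨su, hsu, hus⟩ := hu
    obtain ⟨sv, hsv, hvs⟩ := hv
    rcases hchain.total hsu hsv with hss | hss
    · exact (hC hsv).2 u (hss hus) v hvs huv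
    · exact (hC hsu).2 u hus v (hss hvs) huv)
  have hTω : T ⊆ ω := hTmax.prop.1
  have hTsep := hTmax.prop.2
  -- covering property
  have hcover : ∀ y ∈ ω, ∃ t ∈ T, dist y t ≤ c * infDist t M := by
    intro y hy
    by_cases hyT : y ∈ T
    · exact ⟨y, hyT, by
        simp only [dist_self]
        exact mul_nonneg hc0.le infDist_nonneg⟩
    · by_contra hcon
      push_neg at hcon
      have hins : insert y T ∈ Good := by
        constructor
        · exact Set.insert_subset hy hTω
        · intro u hu v hv huv
          rcases Set.mem_insert_iff.mp hu with rfl | hu'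
          · rcases Set.mem_insert_iff.mp hv with rfl | hv'
            · exact absurd rfl huv
            · have h1 := hcon v hv'
              have h2 : min (infDist u M) (infDist v M) ≤ infDist v M := min_le_right _ _
              have h3 : 0 ≤ infDist v M := infDist_nonneg
              nlinarith
          · rcases Set.mem_insert_iff.mp hv with rfl | hv'
            · have h1 := hcon u hu'
              have h2 : min (infDist u M) (infDist v M) ≤ infDist u M := min_le_left _ _
              have h3 : 0 ≤ infDist u M := infDist_nonneg
              rw [dist_comm] at h1
              nlinarith
            · exact hTsep u hu' v hv' huv
      have hsub := hTmax.2 hins (Set.subset_insert y T)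
      exact hyT (hsub (Set.mem_insert y T))
  -- countability of T
  have hTc : T.Countable := by
    have hTun : T = ⋃ n : ℕ, {z ∈ T | 1/((n:ℝ)+1) < infDist z M} := by
      ext z
      simp only [Set.mem_iUnion, Set.mem_setOf_eq]
      constructor
      · intro hz
        obtain ⟨n, hn⟩ := exists_nat_one_div_lt (hfpos z (hTω hz))
        exact ⟨n, hz, hn⟩
      · rintro ⟨n, hz, _⟩; exact hz
    rw [hTun]
    refine Set.countable_iUnion fun n => countable_of_separated
      (ε := c/(2*((n:ℝ)+1))) (by positivity) ?_
    intro u hu v hv huv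
    have h1 := hTsep u hu.1 v hv.1 huv
    have h2 : 1/((n:ℝ)+1) ≤ min (infDist u M) (infDist v M) := le_min hu.2.le hv.2.le
    have h3 : c/(2*((n:ℝ)+1)) = c/2 * (1/((n:ℝ)+1)) := by
      field_simp
    have h4 : c/2 * (1/((n:ℝ)+1)) ≤ c/2 * min (infDist u M) (infDist v M) :=
      mul_le_mul_of_nonneg_left h2 (by linarith)
    linarith
  -- overlap bound
  have hoverlap : ∀ y : EuclideanSpace ℝ (Fin d),
      {t ∈ T | dist y t ≤ a * infDist t M}.encard
        ≤ (Nat.ceil (((R₀ + s₀/3)/(s₀/3))^d) : ℕ∞) := by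
    intro y
    by_cases hy0 : 0 < infDist y M
    · have hbound : ∀ t ∈ {t ∈ T | dist y t ≤ a * infDist t M},
          dist y t ≤ R₀ * infDist y M := by
        rintro t ⟨htT, hdt⟩
        have h1 : infDist t M ≤ infDist y M + dist t y := hlip t y
        rw [dist_comm t y] at h1
        have h2 : infDist t M ≤ infDist y M / (1 - a) := by
          rw [le_div_iff₀ (by linarith)]
          nlinarith
        calc dist y t ≤ a * infDist t M := hdt
          _ ≤ a * (infDist y M / (1 - a)) :=
            mul_le_mul_of_nonneg_left h2 ha0.le
          _ = R₀ * infDist y M := by rw [hR₀]; ring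
      have hsep' : ∀ t ∈ {t ∈ T | dist y t ≤ a * infDist t M},
          ∀ u ∈ {t ∈ T | dist y t ≤ a * infDist t M}, t ≠ u →
            s₀ * infDist y M ≤ dist t u := by
        rintro t ⟨htT, hdt⟩ u ⟨huT, hdu⟩ htu
        have h1 := hTsep t htT u huT htu
        have hft : infDist y M / (1 + a) ≤ infDist t M := by
          rw [div_le_iff₀ (by linarith)]
          have h2 : infDist y M ≤ infDist t M + dist y t := hlip y t
          nlinarith
        have hfu : infDist y M / (1 + a) ≤ infDist u M := by
          rw [div_le_iff₀ (by linarith)]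
          have h2 : infDist y M ≤ infDist u M + dist y u := hlip y u
          nlinarith
        have h5 : infDist y M / (1 + a) ≤ min (infDist t M) (infDist u M) := le_min hft hfu
        have h6 : s₀ * infDist y M = c/2 * (infDist y M / (1 + a)) := by
          rw [hs₀]; field_simp
        have h7 : c/2 * (infDist y M / (1 + a)) ≤ c/2 * min (infDist t M) (infDist u M) :=
          mul_le_mul_of_nonneg_left h5 (by linarith)
        linarith
      have hkey := encard_le_separated (mul_pos hs₀0 hy0) hbound hsep'
      have hEq : (R₀ * infDist y M + s₀ * infDist y M / 3) / (s₀ * infDist y M / 3)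
          = (R₀ + s₀/3) / (s₀/3) := by
        rw [div_eq_div_iff (by positivity) (by positivity)]
        ring
      rwa [hEq] at hkey
    · have hempty : {t ∈ T | dist y t ≤ a * infDist t M} = ∅ := by
        ext t
        simp only [Set.mem_setOf_eq, Set.mem_empty_iff_false, iff_false, not_and]
        intro htT hdt
        have hft := hfpos t (hTω htT)
        have h1 : infDist t M ≤ infDist y M + dist t y := hlip t y
        rw [dist_comm t y] at h1
        have : 0 < infDist y M := by nlinarith
        exact hy0 this
      rw [hempty]
      simp
  -- enumeration
  rcases T.eq_empty_or_nonempty with hTe | hTne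
  · have hωe : ω = ∅ := by
      by_contra hne
      obtain ⟨y, hy⟩ := Set.nonempty_iff_ne_empty.mpr hne
      obtain ⟨t, ht, _⟩ := hcover y hy
      rw [hTe] at ht
      exact ht
    refine ⟨∅, fun _ => 0, by simp, by simp [hωe], ?_⟩
    intro y
    have : {i ∈ (∅ : Set ℕ) | y ∈ closedBall ((fun _ => (0:EuclideanSpace ℝ (Fin d))) i)
        (a * infDist ((fun _ => (0:EuclideanSpace ℝ (Fin d))) i) M)} = ∅ := by
      ext i; simp
    rw [this]
    simp
  · obtain ⟨g, hg⟩ := Set.countable_iff_exists_injOn.mp hTc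
    set S : Set ℕ := g '' T with hS
    set x : ℕ → EuclideanSpace ℝ (Fin d) :=
      fun i => if h : ∃ t ∈ T, g t = i then h.choose else hTne.choose with hx
    have hxT : ∀ i ∈ S, x i ∈ T ∧ g (x i) = i := by
      rintro i ⟨t, ht, rfl⟩
      have hex : ∃ t' ∈ T, g t' = g t := ⟨t, ht, rfl⟩
      rw [hx]
      simp only [dif_pos hex]
      exact ⟨hex.choose_spec.1, hex.choose_spec.2⟩
    have hxgt : ∀ t ∈ T, x (g t) = t := by
      intro t ht
      have hi : g t ∈ S := ⟨t, ht, rfl⟩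
      obtain ⟨hxT', hgx⟩ := hxT _ hi
      exact hg hxT' ht hgx
    refine ⟨S, x, fun i hi => hTω (hxT i hi).1, ?_, ?_⟩
    · intro y hy
      obtain ⟨t, ht, hdt⟩ := hcover y hy
      have hgt : g t ∈ S := ⟨t, ht, rfl⟩
      refine Set.mem_biUnion hgt ?_
      rw [hxgt t ht]
      exact mem_closedBall.mpr hdt
    · intro y
      have hinj : Set.InjOn x S := by
        intro i hi j hj hij
        have h1 := hxT i hi
        have h2 := hxT j hj
        rw [← h1.2, ← h2.2, hij]
      set I := {i ∈ S | y ∈ closedBall (x i) (a * infDist (x i) M)} with hI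
      have hIS : I ⊆ S := fun i hi => hi.1
      have himg : x '' I ⊆ {t ∈ T | dist y t ≤ a * infDist t M} := by
        rintro _ ⟨i, hi, rfl⟩
        exact ⟨(hxT i hi.1).1, mem_closedBall.mp hi.2⟩
      calc I.encard = (x '' I).encard := ((hinj.mono hIS).encard_image).symm
        _ ≤ {t ∈ T | dist y t ≤ a * infDist t M}.encard := Set.encard_mono himg
        _ ≤ _ := hoverlap y
end

section
/- Hardy-type estimate for a dilation difference: Let T̂ = {(ξ,η) : 0 < η < ξ < 1}, β ∈ (0,1), and u ∈ H¹(T̂). Then ∫_{T̂} ξ^{−2} (u(ξ, βη) − u(βξ, βη))² dξ dη ≤ C ∫_{T̂} |∂₁u(ξ,η)|² dξ dη for a constant C depending only on β. -/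
/-! Along the segment `s ↦ (sξ, βη)`, `s ∈ [β, 1]`, which stays in `T̂`, the fundamental theorem
of calculus and Cauchy–Schwarz give `ξ⁻² (u(ξ,βη) - u(βξ,βη))² ≤ (1-β) ∫_β^1 |∂₁u(sξ,βη)|² ds`.
Integrating over `T̂` and exchanging the integrals, for each `s ∈ (β, 1]` the dilation
`(ξ,η) ↦ (sξ,βη)` maps `T̂` into itself with Jacobian `sβ ≥ β²`, which yields `C = (1-β)²/β²`. -/

open MeasureTheory Set
open scoped ENNReal

/-- The reference triangle `T̂ = {(ξ,η) : 0 < η < ξ < 1}`. -/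
def refTriangle : Set (ℝ × ℝ) := {p | 0 < p.1 ∧ p.1 < 1 ∧ 0 < p.2 ∧ p.2 < p.1}

lemma isOpen_refTriangle : IsOpen refTriangle :=
  (isOpen_lt continuous_const continuous_fst).inter <|
    (isOpen_lt continuous_fst continuous_const).inter <|
      (isOpen_lt continuous_const continuous_snd).inter (isOpen_lt continuous_snd continuous_fst)

lemma dilation_mem_refTriangle {a b : ℝ} (hb : 0 < b) (hba : b ≤ a) (ha : a ≤ 1)
    {p : ℝ × ℝ} (hp : p ∈ refTriangle) : (a * p.1, b * p.2) ∈ refTriangle := by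
  obtain ⟨h1, h2, h3, h4⟩ := hp
  exact ⟨by nlinarith, by nlinarith, by positivity, by nlinarith⟩

lemma lintegral_comp_mul_prod_mul {a b : ℝ} (ha : a ≠ 0) (hb : b ≠ 0)
    {F : ℝ × ℝ → ℝ≥0∞} (hF : Measurable F) :
    ∫⁻ p : ℝ × ℝ, F (a * p.1, b * p.2) = ENNReal.ofReal |a * b|⁻¹ * ∫⁻ p, F p := by
  have hmap : (volume : Measure (ℝ × ℝ)).map (Prod.map (fun x : ℝ => a * x) (fun y : ℝ => b * y)) =
      ENNReal.ofReal |a * b|⁻¹ • volume := by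
    rw [Measure.volume_eq_prod, ← Measure.map_prod_map _ _ (measurable_const_mul a)
      (measurable_const_mul b), Real.map_volume_mul_left ha, Real.map_volume_mul_left hb,
      Measure.prod_smul_left, Measure.prod_smul_right, smul_smul, ← ENNReal.ofReal_mul
      (abs_nonneg _), ← abs_mul, ← abs_inv, mul_inv]
  rw [← smul_eq_mul, ← lintegral_smul_measure, ← hmap, lintegral_map hF (by fun_prop)]
  rfl

lemma ofReal_sq_eq_enorm_sq (x : ℝ) : ENNReal.ofReal (x ^ 2) = ‖x‖ₑ ^ 2 := by
  rw [Real.enorm_eq_ofReal_abs, ← ENNReal.ofReal_pow (abs_nonneg x), sq_abs]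

lemma sq_lintegral_le_measure_univ_mul_lintegral_sq {α : Type*} [MeasurableSpace α]
    (μ : Measure α) {f : α → ℝ≥0∞} (hf : AEMeasurable f μ) :
    (∫⁻ a, f a ∂μ) ^ 2 ≤ μ univ * ∫⁻ a, f a ^ 2 ∂μ := by
  have h := ENNReal.lintegral_mul_le_Lp_mul_Lq μ Real.HolderConjugate.two_two hf
    (aemeasurable_const (b := (1 : ℝ≥0∞)))
  simp only [Pi.mul_apply, mul_one, ENNReal.one_rpow, lintegral_const, one_mul] at h
  calc (∫⁻ a, f a ∂μ) ^ 2
      ≤ ((∫⁻ a, f a ^ (2 : ℝ) ∂μ) ^ (1 / (2 : ℝ)) * μ univ ^ (1 / (2 : ℝ))) ^ 2 := by gcongr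
    _ = μ univ * ∫⁻ a, f a ^ 2 ∂μ := by
      rw [mul_comm (μ univ), mul_pow, ← ENNReal.rpow_natCast (_ ^ _) 2,
        ← ENNReal.rpow_natCast (_ ^ _) 2, ← ENNReal.rpow_mul, ← ENNReal.rpow_mul]
      norm_num

lemma ofReal_sq_sub_le_mul_lintegral_sq {f f' : ℝ → ℝ} {a b : ℝ} (hab : a ≤ b)
    (hf : ∀ x ∈ Icc a b, HasDerivAt f (f' x) x) (hf' : IntervalIntegrable f' volume a b) :
    ENNReal.ofReal ((f b - f a) ^ 2) ≤
      ENNReal.ofReal (b - a) * ∫⁻ x in Ioc a b, ENNReal.ofReal (f' x ^ 2) := by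
  have hftc : f b - f a = ∫ x in Ioc a b, f' x := by
    rw [← intervalIntegral.integral_of_le hab,
      intervalIntegral.integral_eq_sub_of_hasDerivAt (by rwa [uIcc_of_le hab]) hf']
  simp only [ofReal_sq_eq_enorm_sq]
  calc ‖f b - f a‖ₑ ^ 2 ≤ (∫⁻ x in Ioc a b, ‖f' x‖ₑ) ^ 2 := by
        rw [hftc]; gcongr; exact enorm_integral_le_lintegral_enorm _
    _ ≤ ENNReal.ofReal (b - a) * ∫⁻ x in Ioc a b, ‖f' x‖ₑ ^ 2 := by
        convert sq_lintegral_le_measure_univ_mul_lintegral_sq _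
          hf'.1.aestronglyMeasurable.enorm using 2
        rw [Measure.restrict_apply_univ, Real.volume_Ioc]

lemma setLIntegral_refTriangle_comp_dilation_le {a b : ℝ} (hb : 0 < b) (hba : b ≤ a)
    (ha : a ≤ 1) {G : ℝ × ℝ → ℝ≥0∞} (hG : Measurable G) :
    ∫⁻ p in refTriangle, G (a * p.1, b * p.2) ≤
      ENNReal.ofReal (a * b)⁻¹ * ∫⁻ p in refTriangle, G p := by
  have hT := isOpen_refTriangle.measurableSet
  calc ∫⁻ p in refTriangle, G (a * p.1, b * p.2)
      ≤ ∫⁻ p : ℝ × ℝ, refTriangle.indicator G (a * p.1, b * p.2) := by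
        rw [← lintegral_indicator hT]
        refine lintegral_mono <| indicator_le
          (g := fun q : ℝ × ℝ => refTriangle.indicator G (a * q.1, b * q.2)) fun q hq => ?_
        rw [indicator_of_mem (dilation_mem_refTriangle hb hba ha hq)]
    _ = ENNReal.ofReal (a * b)⁻¹ * ∫⁻ p in refTriangle, G p := by
        rw [lintegral_comp_mul_prod_mul (by linarith) hb.ne' (hG.indicator hT),
          lintegral_indicator hT, abs_of_pos (by nlinarith)]

lemma ofReal_dilation_difference_sq_le {β : ℝ} (hβ0 : 0 < β) (hβ1 : β ≤ 1) {u : ℝ × ℝ → ℝ}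
    (hu : ContDiffOn ℝ 1 u refTriangle) {p : ℝ × ℝ} (hp : p ∈ refTriangle) :
    ENNReal.ofReal ((p.1 ^ 2)⁻¹ * (u (p.1, β * p.2) - u (β * p.1, β * p.2)) ^ 2) ≤
      ENNReal.ofReal (1 - β) *
        ∫⁻ s in Ioc β 1, ENNReal.ofReal ((fderiv ℝ u (s * p.1, β * p.2) (1, 0)) ^ 2) := by
  obtain ⟨ξ, η⟩ := p
  have hξ : ξ ≠ 0 := hp.1.ne'
  have hmem : ∀ s ∈ Icc β 1, (s * ξ, β * η) ∈ refTriangle := fun s hs =>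
    dilation_mem_refTriangle hβ0 hs.1 hs.2 hp
  -- the factor `ξ⁻¹` cancels the inner derivative, leaving exactly `∂₁u (sξ, βη)`
  have hderiv : ∀ s ∈ Icc β 1, HasDerivAt (fun s => ξ⁻¹ * u (s * ξ, β * η))
      (fderiv ℝ u (s * ξ, β * η) (1, 0)) s := by
    intro s hs
    have hu' : DifferentiableAt ℝ u (s * ξ, β * η) :=
      (hu.differentiableOn one_ne_zero).differentiableAt
        (isOpen_refTriangle.mem_nhds (hmem s hs))
    refine ((hu'.hasFDerivAt.comp_hasDerivAt s ((hasDerivAt_mul_const ξ).prodMk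
      (hasDerivAt_const s (β * η)))).const_mul ξ⁻¹).congr_deriv ?_
    rw [show ((ξ, 0) : ℝ × ℝ) = ξ • (1, 0) by simp, map_smul, smul_eq_mul,
      inv_mul_cancel_left₀ hξ]
  have hcont : ContinuousOn (fun s => fderiv ℝ u (s * ξ, β * η) (1, 0)) (Icc β 1) :=
    ((hu.continuousOn_fderiv_of_isOpen isOpen_refTriangle le_rfl).comp
      (by fun_prop) hmem).clm_apply continuousOn_const
  have key := ofReal_sq_sub_le_mul_lintegral_sq hβ1 hderiv (hcont.intervalIntegrable_of_Icc hβ1)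
  convert key using 2
  simp only [one_mul]
  rw [← mul_sub, mul_pow, inv_pow]

lemma setLIntegral_dilation_difference_sq_le {β : ℝ} (hβ0 : 0 < β) (hβ1 : β ≤ 1)
    {u : ℝ × ℝ → ℝ} (hu : ContDiffOn ℝ 1 u refTriangle) :
    ∫⁻ p in refTriangle,
        ENNReal.ofReal ((p.1 ^ 2)⁻¹ * (u (p.1, β * p.2) - u (β * p.1, β * p.2)) ^ 2) ≤
      ENNReal.ofReal ((1 - β) ^ 2 / β ^ 2) *
        ∫⁻ p in refTriangle, ENNReal.ofReal ((fderiv ℝ u p (1, 0)) ^ 2) := by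
  set G : ℝ × ℝ → ℝ≥0∞ := fun q => ENNReal.ofReal ((fderiv ℝ u q (1, 0)) ^ 2)
  have hG : Measurable G := ((measurable_fderiv_apply_const ℝ u _).pow_const 2).ennreal_ofReal
  have hdil : ∀ s ∈ Ioc β 1, ∫⁻ p in refTriangle, G (s * p.1, β * p.2) ≤
      ENNReal.ofReal (β ^ 2)⁻¹ * ∫⁻ p in refTriangle, G p := fun s hs => by
    refine (setLIntegral_refTriangle_comp_dilation_le hβ0 hs.1.le hs.2 hG).trans ?_
    gcongr
    nlinarith [hs.1]
  calc ∫⁻ p in refTriangle,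
        ENNReal.ofReal ((p.1 ^ 2)⁻¹ * (u (p.1, β * p.2) - u (β * p.1, β * p.2)) ^ 2)
      ≤ ∫⁻ p in refTriangle, ENNReal.ofReal (1 - β) * ∫⁻ s in Ioc β 1, G (s * p.1, β * p.2) :=
        setLIntegral_mono' isOpen_refTriangle.measurableSet fun p hp =>
          ofReal_dilation_difference_sq_le hβ0 hβ1 hu hp
    _ = ENNReal.ofReal (1 - β) * ∫⁻ s in Ioc β 1, ∫⁻ p in refTriangle, G (s * p.1, β * p.2) := by
        have hmeas : Measurable (Function.uncurry fun (p : ℝ × ℝ) (s : ℝ) =>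
            G (s * p.1, β * p.2)) := hG.comp (by fun_prop)
        rw [lintegral_const_mul' _ _ ENNReal.ofReal_ne_top,
          lintegral_lintegral_swap hmeas.aemeasurable]
    _ ≤ ENNReal.ofReal (1 - β) *
          ∫⁻ _ in Ioc β 1, ENNReal.ofReal (β ^ 2)⁻¹ * ∫⁻ p in refTriangle, G p := by
        gcongr _ * ?_
        exact setLIntegral_mono' measurableSet_Ioc hdil
    _ = ENNReal.ofReal ((1 - β) ^ 2 / β ^ 2) * ∫⁻ p in refTriangle, G p := by
        rw [setLIntegral_const, Real.volume_Ioc, mul_comm _ (ENNReal.ofReal (1 - β)),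
          ← mul_assoc, ← mul_assoc, ← ENNReal.ofReal_mul (by linarith),
          ← ENNReal.ofReal_mul (by nlinarith)]
        congr 2
        ring

/-- Hardy-type estimate for a dilation difference: for `β ∈ (0,1)` there is `C = C(β)` with
`∫_{T̂} ξ⁻² (u(ξ,βη) - u(βξ,βη))² dξ dη ≤ C ∫_{T̂} |∂₁u|²` for all `u ∈ H¹(T̂)`. -/
theorem hardy_dilation_difference (β : ℝ) (hβ : β ∈ Set.Ioo (0:ℝ) 1) :
    ∃ C : ℝ, 0 < C ∧
      ∀ u : ℝ × ℝ → ℝ, ContDiffOn ℝ 1 u refTriangle →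
        (∫⁻ p in refTriangle,
            ENNReal.ofReal ((p.1 ^ 2)⁻¹ * (u (p.1, β * p.2) - u (β * p.1, β * p.2)) ^ 2))
          ≤ ENNReal.ofReal C *
            ∫⁻ p in refTriangle,
              ENNReal.ofReal ((fderivWithin ℝ u refTriangle p (1, 0)) ^ 2) := by
  obtain ⟨hβ0, hβ1⟩ := hβ
  refine ⟨(1 - β) ^ 2 / β ^ 2, by have := sub_pos.2 hβ1; positivity, fun u hu => ?_⟩
  convert setLIntegral_dilation_difference_sq_le hβ0 hβ1.le hu using 2
  exact setLIntegral_congr_fun isOpen_refTriangle.measurableSet fun p hp => by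
    rw [fderivWithin_of_isOpen isOpen_refTriangle hp]
end

section
/- Stability constant of composed additive Schwarz bounds: Let a(·,·) be a symmetric positive definite bilinear form on a finite-dimensional space 𝔙 with subspaces 𝔙_i ⊆ 𝔙 (i = 0,…,N, with embeddings R_iᵀ) and SPD local forms ã_i. Suppose (i) every u ∈ 𝔙 admits a decomposition u = Σ_i R_iᵀ u_i with Σ_i ã_i(u_i,u_i) ≤ C₀ a(u,u), and (ii) for every decomposition u = Σ_i R_iᵀ v_i one has a(u,u) ≤ C₁ Σ_i ã_i(v_i,v_i). Then the additive Schwarz preconditioned operator B⁻¹A with B⁻¹ = Σ_i R_iᵀ Ã_i⁻¹ R_i satisfies λ_min(B⁻¹A) ≥ C₀⁻¹ and λ_max(B⁻¹A) ≤ C₁, hence κ(B⁻¹A) ≤ C₀C₁. -/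
/-!
Write `P = Σ Pᵢ`. Since `ãᵢ(Pᵢu, v) = a(u, v)` on `𝔙ᵢ`, testing against a stable decomposition
`u = Σ uᵢ` gives `a(u,u) = Σ ãᵢ(Pᵢu, uᵢ)`, and the weighted inequality
`2 C₀ ãᵢ(x,y) ≤ C₀² ãᵢ(x,x) + ãᵢ(y,y)` turns this into `a(u,u) ≤ C₀ a(u,Pu)`.
Testing instead the decomposition `Pu = Σ Pᵢu` against (ii) gives `a(Pu,Pu) ≤ C₁ a(u,Pu)`.
For an eigenvector `Pu = μu` these two Rayleigh-quotient bounds read `C₀⁻¹ ≤ μ ≤ C₁`.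
-/

open Finset

section SchwarzBounds

variable {E ι : Type*} [AddCommGroup E] [Module ℝ E]

def IsSchwarzProjection (a : E →ₗ[ℝ] E →ₗ[ℝ] ℝ) (V : ι → Submodule ℝ E)
    (atil : ι → E →ₗ[ℝ] E →ₗ[ℝ] ℝ) (P : ι → E → E) : Prop :=
  ∀ i u, P i u ∈ V i ∧ ∀ v ∈ V i, atil i (P i u) v = a u v

lemma apply_self_nonneg_of_pos {b : E →ₗ[ℝ] E →ₗ[ℝ] ℝ} {S : Submodule ℝ E}
    (hpos : ∀ v ∈ S, v ≠ 0 → 0 < b v v) {v : E} (hv : v ∈ S) : 0 ≤ b v v := by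
  rcases eq_or_ne v 0 with rfl | hne
  · simp
  · exact (hpos v hv hne).le

lemma two_mul_mul_apply_le {b : E →ₗ[ℝ] E →ₗ[ℝ] ℝ} {S : Submodule ℝ E}
    (hsymm : ∀ u ∈ S, ∀ v ∈ S, b u v = b v u) (hpos : ∀ v ∈ S, v ≠ 0 → 0 < b v v)
    {x y : E} (hx : x ∈ S) (hy : y ∈ S) (t : ℝ) :
    2 * t * b x y ≤ t ^ 2 * b x x + b y y := by
  have hsq : 0 ≤ b (t • x - y) (t • x - y) :=
    apply_self_nonneg_of_pos hpos (S.sub_mem (S.smul_mem t hx) hy)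
  simp only [map_sub, map_smul, LinearMap.sub_apply, LinearMap.smul_apply, smul_eq_mul,
    hsymm y hy x hx] at hsq
  linarith

variable [Fintype ι]

lemma sum_apply_proj_self {a : E →ₗ[ℝ] E →ₗ[ℝ] ℝ} {V : ι → Submodule ℝ E}
    {atil : ι → E →ₗ[ℝ] E →ₗ[ℝ] ℝ} {P : ι → E → E} (hP : IsSchwarzProjection a V atil P)
    (u : E) : ∑ i, atil i (P i u) (P i u) = a u (∑ i, P i u) := by
  rw [map_sum]
  exact sum_congr rfl fun i _ => (hP i u).2 _ (hP i u).1

lemma apply_self_le_mul_apply_sum_proj {a : E →ₗ[ℝ] E →ₗ[ℝ] ℝ} {V : ι → Submodule ℝ E}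
    {atil : ι → E →ₗ[ℝ] E →ₗ[ℝ] ℝ} {P : ι → E → E} (hP : IsSchwarzProjection a V atil P)
    (htsymm : ∀ i, ∀ u ∈ V i, ∀ v ∈ V i, atil i u v = atil i v u)
    (htpos : ∀ i, ∀ v ∈ V i, v ≠ 0 → 0 < atil i v v)
    {C₀ : ℝ} (hC₀ : 0 < C₀) {u : E} (us : ι → E) (hmem : ∀ i, us i ∈ V i)
    (hdec : u = ∑ i, us i) (hstable : ∑ i, atil i (us i) (us i) ≤ C₀ * a u u) :
    a u u ≤ C₀ * a u (∑ i, P i u) := by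
  have hsplit : a u u = ∑ i, atil i (P i u) (us i) :=
    calc a u u = ∑ i, a u (us i) := by rw [← map_sum, ← hdec]
      _ = ∑ i, atil i (P i u) (us i) := sum_congr rfl fun i _ => ((hP i u).2 _ (hmem i)).symm
  have hweighted : 2 * C₀ * a u u ≤ C₀ ^ 2 * a u (∑ i, P i u) + ∑ i, atil i (us i) (us i) := by
    rw [hsplit, ← sum_apply_proj_self hP, mul_sum, mul_sum, ← sum_add_distrib]
    exact sum_le_sum fun i _ => two_mul_mul_apply_le (htsymm i) (htpos i) (hP i u).1 (hmem i) C₀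
  have : C₀ * a u u ≤ C₀ * (C₀ * a u (∑ i, P i u)) := by nlinarith
  exact le_of_mul_le_mul_left this hC₀

lemma apply_sum_proj_le_mul_apply_sum_proj {a : E →ₗ[ℝ] E →ₗ[ℝ] ℝ}
    {V : ι → Submodule ℝ E} {atil : ι → E →ₗ[ℝ] E →ₗ[ℝ] ℝ} {P : ι → E → E}
    (hP : IsSchwarzProjection a V atil P) {C₁ : ℝ}
    (hbound : ∀ (u : E) (vs : ι → E), (∀ i, vs i ∈ V i) → u = ∑ i, vs i →
      a u u ≤ C₁ * ∑ i, atil i (vs i) (vs i)) (u : E) :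
    a (∑ i, P i u) (∑ i, P i u) ≤ C₁ * a u (∑ i, P i u) :=
  sum_apply_proj_self hP u ▸ hbound _ (fun i => P i u) (fun i => (hP i u).1) rfl

lemma inv_le_and_le_of_eq_smul {a : E →ₗ[ℝ] E →ₗ[ℝ] ℝ} {u w : E} {μ C₀ C₁ : ℝ}
    (hC₀ : 0 < C₀) (hu : 0 < a u u) (hw : w = μ • u)
    (hlow : a u u ≤ C₀ * a u w) (hup : a w w ≤ C₁ * a u w) : C₀⁻¹ ≤ μ ∧ μ ≤ C₁ := by
  subst hw
  simp only [map_smul, LinearMap.smul_apply, smul_eq_mul] at hlow hup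
  have hμ : C₀⁻¹ ≤ μ := by
    rw [inv_le_iff_one_le_mul₀' hC₀]
    nlinarith
  have hμpos : 0 < μ := (inv_pos.2 hC₀).trans_le hμ
  exact ⟨hμ, le_of_mul_le_mul_left (by nlinarith) (mul_pos hμpos hu)⟩

end SchwarzBounds

theorem additive_schwarz_condition_number_general
    (𝔙 : Type) [NormedAddCommGroup 𝔙] [InnerProductSpace ℝ 𝔙]
    (N : ℕ) (a : 𝔙 →ₗ[ℝ] 𝔙 →ₗ[ℝ] ℝ)
    (hapos : ∀ u, u ≠ 0 → 0 < a u u)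
    (V : Fin (N + 1) → Submodule ℝ 𝔙)
    (atil : Fin (N + 1) → (𝔙 →ₗ[ℝ] 𝔙 →ₗ[ℝ] ℝ))
    (htsymm : ∀ i, ∀ u ∈ V i, ∀ v ∈ V i, atil i u v = atil i v u)
    (htpos : ∀ i, ∀ v ∈ V i, v ≠ 0 → 0 < atil i v v)
    (C₀ C₁ : ℝ) (hC₀ : 0 < C₀)
    -- (i) stable decomposition
    (hstable : ∀ u : 𝔙, ∃ us : Fin (N + 1) → 𝔙, (∀ i, us i ∈ V i) ∧
      u = ∑ i, us i ∧ ∑ i, atil i (us i) (us i) ≤ C₀ * a u u)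
    -- (ii) bound for arbitrary decompositions
    (hbound : ∀ (u : 𝔙) (vs : Fin (N + 1) → 𝔙), (∀ i, vs i ∈ V i) → u = ∑ i, vs i →
      a u u ≤ C₁ * ∑ i, atil i (vs i) (vs i))
    -- the local projections P_i, i.e. the components of B⁻¹A
    (P : Fin (N + 1) → 𝔙 → 𝔙)
    (hP : ∀ (i : Fin (N + 1)) (u : 𝔙), P i u ∈ V i ∧ ∀ v ∈ V i, atil i (P i u) v = a u v) :
    (∀ (μ : ℝ) (u : 𝔙), u ≠ 0 → (∑ i, P i u) = μ • u → C₀⁻¹ ≤ μ ∧ μ ≤ C₁) ∧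
    (∀ (μ ν : ℝ) (u w : 𝔙), u ≠ 0 → w ≠ 0 →
      (∑ i, P i u) = μ • u → (∑ i, P i w) = ν • w → μ ≤ C₀ * C₁ * ν) := by
  have eigenvalue_bounds (μ : ℝ) (u : 𝔙) (hu : u ≠ 0) (heig : ∑ i, P i u = μ • u) :
      C₀⁻¹ ≤ μ ∧ μ ≤ C₁ := by
    obtain ⟨us, hmem, hdec, hus⟩ := hstable u
    exact inv_le_and_le_of_eq_smul hC₀ (hapos u hu) heig
      (apply_self_le_mul_apply_sum_proj hP htsymm htpos hC₀ us hmem hdec hus)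
      (apply_sum_proj_le_mul_apply_sum_proj hP hbound u)
  refine ⟨eigenvalue_bounds, fun μ ν u w hu hw hμ hν => ?_⟩
  obtain ⟨hμ₀, hμ₁⟩ := eigenvalue_bounds μ u hu hμ
  obtain ⟨hν₀, -⟩ := eigenvalue_bounds ν w hw hν
  have hC₁ : 0 ≤ C₁ := ((inv_pos.2 hC₀).le.trans hμ₀).trans hμ₁
  have hν : 1 ≤ C₀ * ν := (inv_le_iff_one_le_mul₀' hC₀).1 hν₀
  calc μ ≤ C₁ * 1 := by rwa [mul_one]
    _ ≤ C₁ * (C₀ * ν) := mul_le_mul_of_nonneg_left hν hC₁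
    _ = C₀ * C₁ * ν := by ring

/-- Additive Schwarz condition number bounds: given SPD bilinear forms `a` and local
solvers `ã_i` on subspaces `V_i`, if (i) every `u` admits a decomposition
`u = Σ u_i` with `Σ ã_i(u_i,u_i) ≤ C₀ a(u,u)`, and (ii) every decomposition
`u = Σ v_i` satisfies `a(u,u) ≤ C₁ Σ ã_i(v_i,v_i)`, then every eigenvalue `μ` of the
additive Schwarz operator `P = Σ P_i` (where `ã_i(P_i u, v) = a(u,v)` for `v ∈ V_i`,
i.e. `P = B⁻¹A`) satisfies `C₀⁻¹ ≤ μ ≤ C₁`; in particular any two eigenvalues have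
ratio at most `C₀C₁`, so `κ(B⁻¹A) ≤ C₀C₁`. -/
theorem additive_schwarz_condition_number
    (𝔙 : Type) [NormedAddCommGroup 𝔙] [InnerProductSpace ℝ 𝔙] [FiniteDimensional ℝ 𝔙]
    (N : ℕ) (a : 𝔙 →ₗ[ℝ] 𝔙 →ₗ[ℝ] ℝ)
    (hasymm : ∀ u v, a u v = a v u) (hapos : ∀ u, u ≠ 0 → 0 < a u u)
    (V : Fin (N + 1) → Submodule ℝ 𝔙)
    (atil : Fin (N + 1) → (𝔙 →ₗ[ℝ] 𝔙 →ₗ[ℝ] ℝ))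
    (htsymm : ∀ i, ∀ u ∈ V i, ∀ v ∈ V i, atil i u v = atil i v u)
    (htpos : ∀ i, ∀ v ∈ V i, v ≠ 0 → 0 < atil i v v)
    (C₀ C₁ : ℝ) (hC₀ : 0 < C₀) (hC₁ : 0 < C₁)
    -- (i) stable decomposition
    (hstable : ∀ u : 𝔙, ∃ us : Fin (N + 1) → 𝔙, (∀ i, us i ∈ V i) ∧
      u = ∑ i, us i ∧ ∑ i, atil i (us i) (us i) ≤ C₀ * a u u)
    -- (ii) bound for arbitrary decompositions
    (hbound : ∀ (u : 𝔙) (vs : Fin (N + 1) → 𝔙), (∀ i, vs i ∈ V i) → u = ∑ i, vs i →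
      a u u ≤ C₁ * ∑ i, atil i (vs i) (vs i))
    -- the local projections P_i, i.e. the components of B⁻¹A
    (P : Fin (N + 1) → 𝔙 → 𝔙)
    (hP : ∀ (i : Fin (N + 1)) (u : 𝔙), P i u ∈ V i ∧ ∀ v ∈ V i, atil i (P i u) v = a u v) :
    (∀ (μ : ℝ) (u : 𝔙), u ≠ 0 → (∑ i, P i u) = μ • u → C₀⁻¹ ≤ μ ∧ μ ≤ C₁) ∧
    (∀ (μ ν : ℝ) (u w : 𝔙), u ≠ 0 → w ≠ 0 →
      (∑ i, P i u) = μ • u → (∑ i, P i w) = ν • w → μ ≤ C₀ * C₁ * ν) :=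
  additive_schwarz_condition_number_general 𝔙 N a hapos V atil htsymm htpos C₀ C₁ hC₀ hstable hbound
    P hP
end
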